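/- arXiv:2409.04894 — 2 statements merged into one kernel-verified Lean document; each statement's English description precedes it below -/
import Mathlib

section
/- Let A be a meet-semilattice and S ⊆ A a subset whose join x = ⋁S exists in A. Then x is a distributive join in A (for every a ∈ A, a ⊓ x is the join in A of {a ⊓ s : s ∈ S}) if and only if the join of {↓s : s ∈ S} in the Dedekind–MacNeille completion DM A, which equals ↓x, is a distributive join in DM A, i.e., for every normal ideal N of A, N ∩ ↓x = (⋃{N ∩ ↓s : s ∈ S})ᵘˡ. -/
/-- A normal ideal of a meet-semilattice: a downset `N` with `N = Nᵘˡ`. -/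
def IsNormalIdeal {A : Type*} [SemilatticeInf A] (N : Set A) : Prop :=
  IsLowerSet N ∧ N = lowerBounds (upperBounds N)

/-- Let `A` be a meet-semilattice and `S ⊆ A` a subset whose join
`x = ⋁S` exists in `A`. Then `x` is a distributive join in `A` (for every `a`,
`a ⊓ x` is the join of `{a ⊓ s : s ∈ S}`) iff the join of `{↓s : s ∈ S}` in the
Dedekind–MacNeille completion `DM A`, which equals `↓x`, is a distributive join in
`DM A`: for every normal ideal `N` of `A`, `N ∩ ↓x = (⋃ {N ∩ ↓s : s ∈ S})ᵘˡ`. -/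
theorem distJoin_iff_distJoin_DM (A : Type*) [SemilatticeInf A] [OrderTop A]
    (S : Set A) (x : A) (hx : IsLUB S x) :
    (∀ a : A, IsLUB ((fun s => a ⊓ s) '' S) (a ⊓ x)) ↔
      (∀ N : Set A, IsNormalIdeal N →
        N ∩ Set.Iic x = lowerBounds (upperBounds (⋃ s ∈ S, N ∩ Set.Iic s))) := by
  constructor
  · intro hd N hN
    apply Set.Subset.antisymm
    · rintro a ⟨haN, hax⟩ u hu
      have h1 : ∀ s ∈ S, a ⊓ s ≤ u := fun s hs =>
        hu (Set.mem_biUnion hs ⟨hN.1 inf_le_left haN, inf_le_right⟩)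
      have h2 : a ⊓ x ≤ u := (hd a).2 (by rintro _ ⟨s, hs, rfl⟩; exact h1 s hs)
      calc a = a ⊓ x := (inf_eq_left.mpr hax).symm
        _ ≤ u := h2
    · intro b hb
      have hTsub : (⋃ s ∈ S, N ∩ Set.Iic s) ⊆ N := by
        intro t ht
        simp only [Set.mem_iUnion] at ht
        obtain ⟨s, hs, htN, hts⟩ := ht
        exact htN
      constructor
      · rw [hN.2]
        intro u hu
        exact hb (fun t ht => hu (hTsub ht))
      · refine hb ?_
        intro t ht
        simp only [Set.mem_iUnion] at ht
        obtain ⟨s, hs, htN, hts⟩ := ht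
        exact hts.trans (hx.1 hs)
  · intro h a
    constructor
    · rintro _ ⟨s, hs, rfl⟩
      exact inf_le_inf_left a (hx.1 hs)
    · intro u hu
      have hNa : IsNormalIdeal (Set.Iic a) := by
        refine ⟨fun b c hcb hb => hcb.trans hb, Set.Subset.antisymm ?_ ?_⟩
        · intro b hb v hv
          exact hb.trans (hv le_rfl)
        · intro b hb
          exact hb (fun c hc => hc)
      have key := h (Set.Iic a) hNa
      have hmem : a ⊓ x ∈ Set.Iic a ∩ Set.Iic x := ⟨inf_le_left, inf_le_right⟩
      rw [key] at hmem
      apply hmem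
      intro t ht
      simp only [Set.mem_iUnion] at ht
      obtain ⟨s, hs, hta, hts⟩ := ht
      exact (le_inf hta hts).trans (hu ⟨s, hs, rfl⟩)
end

section
/- For a Priestley space X, the following are equivalent: (1) the lattice ClopUp(X) is proHeyting, i.e., for all clopen upsets U,V of X the relative annihilator {W ∈ ClopUp(X) : U ∩ W ⊆ V} is a normal ideal of ClopUp(X); (2) for all clopen upsets U,V of X, the set X \ ↓(U \ V) is a DM-set of X; (3) for every clopen subset U of X, the set X \ ↓U is a DM-set of X. -/
open Cardinal

section PriestleyDefs

variable {X : Type*} [TopologicalSpace X] [Preorder X]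

/-- The upward closure `↑S` of a set. -/
def upSet (S : Set X) : Set X := {x : X | ∃ y ∈ S, y ≤ x}

/-- The downward closure `↓S` of a set. -/
def downSet (S : Set X) : Set X := {x : X | ∃ y ∈ S, x ≤ y}

/-- `cl₂(S) = ↑cl(S)`, the closure in the topology of open downsets. -/
def cl2 (S : Set X) : Set X := upSet (closure S)

/-- `int₁(S) = X \ ↓(X \ int(S))`, the interior in the topology of open upsets. -/
def int1 (S : Set X) : Set X := (downSet ((interior S)ᶜ))ᶜ

/-- A Dedekind–MacNeille set: an open upset `U` with `int₁(cl₂(U)) = U`. -/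
def IsDMSet (U : Set X) : Prop := IsOpen U ∧ IsUpperSet U ∧ int1 (cl2 U) = U

/-- A clopen upset. -/
def IsClopenUpset (U : Set X) : Prop := IsClopen U ∧ IsUpperSet U

/-- A κ-clopen upset: a union of fewer than `κ` clopen upsets. -/
def IsKappaClopenUpset (κ : Cardinal) (U : Set X) : Prop :=
  ∃ 𝒮 : Set (Set X), (∀ W ∈ 𝒮, IsClopenUpset W) ∧ #𝒮 < κ ∧ U = ⋃₀ 𝒮

end PriestleyDefs

/-- The lattice of clopen upsets of `X`, ordered by inclusion. -/
abbrev ClopUp (X : Type*) [TopologicalSpace X] [Preorder X] :=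
  {U : Set X // IsClopenUpset U}

set_option linter.unusedSectionVars false

section AuxLemmas

variable {X : Type*} [TopologicalSpace X] [PartialOrder X] [CompactSpace X] [PriestleySpace X]

lemma isLowerSet_downSet (S : Set X) : IsLowerSet (downSet S) :=
  fun _a _b hba ⟨y, hy, hay⟩ => ⟨y, hy, hba.trans hay⟩

lemma isUpperSet_upSet (S : Set X) : IsUpperSet (upSet S) :=
  fun _a _b hab ⟨y, hy, hya⟩ => ⟨y, hy, hya.trans hab⟩

lemma subset_cl2 (S : Set X) : S ⊆ cl2 S :=
  fun x hx => ⟨x, subset_closure hx, le_rfl⟩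

lemma cl2_mono {S T : Set X} (h : S ⊆ T) : cl2 S ⊆ cl2 T :=
  fun _x ⟨y, hy, hyx⟩ => ⟨y, closure_mono h hy, hyx⟩

/-- Separating a point outside `↓C` from a closed set `C` by a clopen upset. -/
lemma exists_clopenUpset_of_not_mem_downSet {C : Set X} (hC : IsClosed C) {x : X}
    (hx : x ∉ downSet C) :
    ∃ V : Set X, IsClopenUpset V ∧ x ∈ V ∧ ∀ c ∈ C, c ∉ V := by
  have key : ∀ y : C, ∃ U : Set X, IsClopen U ∧ IsUpperSet U ∧ x ∈ U ∧ (y : X) ∉ U := by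
    intro y
    refine exists_isClopen_upper_of_not_le fun hle => hx ⟨y, y.2, hle⟩
  choose U hUc hUu hxU hyU using key
  obtain ⟨t, ht⟩ := hC.isCompact.elim_finite_subcover (fun y : C => (U y)ᶜ)
    (fun y => (hUc y).compl.isOpen)
    (fun c hc => Set.mem_iUnion.2 ⟨⟨c, hc⟩, hyU ⟨c, hc⟩⟩)
  refine ⟨⋂ y ∈ t, U y, ⟨isClopen_biInter_finset fun y _ => hUc y,
    isUpperSet_iInter₂ fun y _ => hUu y⟩, Set.mem_iInter₂.2 fun y _ => hxU y, ?_⟩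
  intro c hc hcV
  obtain ⟨y, hyt, hcy⟩ := Set.mem_iUnion₂.1 (ht hc)
  exact hcy (Set.mem_iInter₂.1 hcV y hyt)

/-- Separating a closed set from a point outside `↑C` by a clopen upset containing `C`. -/
lemma exists_clopenUpset_superset {C : Set X} (hC : IsClosed C) {x : X}
    (hx : x ∉ upSet C) :
    ∃ Z : Set X, IsClopenUpset Z ∧ C ⊆ Z ∧ x ∉ Z := by
  have key : ∀ y : C, ∃ U : Set X, IsClopen U ∧ IsUpperSet U ∧ (y : X) ∈ U ∧ x ∉ U := by
    intro y
    refine exists_isClopen_upper_of_not_le fun hle => hx ⟨y, y.2, hle⟩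
  choose U hUc hUu hyU hxU using key
  obtain ⟨t, ht⟩ := hC.isCompact.elim_finite_subcover (fun y : C => U y)
    (fun y => (hUc y).isOpen)
    (fun c hc => Set.mem_iUnion.2 ⟨⟨c, hc⟩, hyU ⟨c, hc⟩⟩)
  refine ⟨⋃ y ∈ t, U y, ⟨isClopen_biUnion_finset fun y _ => hUc y,
    isUpperSet_iUnion₂ fun y _ => hUu y⟩, ht, ?_⟩
  intro hxZ
  obtain ⟨y, _, hxy⟩ := Set.mem_iUnion₂.1 hxZ
  exact hxU y hxy

lemma isClosed_downSet {C : Set X} (hC : IsClosed C) : IsClosed (downSet C) := by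
  rw [← isOpen_compl_iff]
  rw [isOpen_iff_forall_mem_open]
  intro x hx
  obtain ⟨V, hV, hxV, hVC⟩ := exists_clopenUpset_of_not_mem_downSet hC hx
  refine ⟨V, ?_, hV.1.isOpen, hxV⟩
  intro v hv ⟨c, hc, hvc⟩
  exact hVC c hc (hV.2 hvc hv)

lemma isClosed_upSet {C : Set X} (hC : IsClosed C) : IsClosed (upSet C) := by
  rw [← isOpen_compl_iff, isOpen_iff_forall_mem_open]
  intro x hx
  obtain ⟨Z, hZ, hCZ, hxZ⟩ := exists_clopenUpset_superset hC hx
  refine ⟨Zᶜ, ?_, hZ.1.compl.isOpen, hxZ⟩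
  intro v hv ⟨c, hc, hcv⟩
  exact hv (hZ.2 hcv (hCZ hc))

lemma isClosed_cl2 (S : Set X) : IsClosed (cl2 S) := isClosed_upSet isClosed_closure

/-- Every open upset is a union of clopen upsets. -/
lemma exists_clopenUpset_mem_subset {O : Set X} (hOo : IsOpen O) (hOu : IsUpperSet O)
    {x : X} (hx : x ∈ O) : ∃ W : Set X, IsClopenUpset W ∧ x ∈ W ∧ W ⊆ O := by
  have hx' : x ∉ downSet Oᶜ := by
    rintro ⟨y, hy, hxy⟩
    exact hy (hOu hxy hx)
  obtain ⟨V, hV, hxV, hVC⟩ := exists_clopenUpset_of_not_mem_downSet hOo.isClosed_compl hx'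
  exact ⟨V, hV, hxV, fun w hw => by_contra fun hwO => hVC w hwO hw⟩

lemma int1_subset (T : Set X) : int1 T ⊆ T := by
  intro x hx
  by_contra hxT
  exact hx ⟨x, fun hi => hxT (interior_subset hi), le_rfl⟩

lemma isUpperSet_int1 (T : Set X) : IsUpperSet (int1 T) :=
  (isLowerSet_downSet _).compl

lemma isOpen_int1 (T : Set X) : IsOpen (int1 T) :=
  (isClosed_downSet isOpen_interior.isClosed_compl).isOpen_compl

lemma subset_int1 {W T : Set X} (hWo : IsOpen W) (hWu : IsUpperSet W) (h : W ⊆ T) :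
    W ⊆ int1 T := by
  intro x hx
  rintro ⟨y, hy, hxy⟩
  exact hy (interior_maximal h hWo (hWu hxy hx))

/-- Reformulation of the DM condition for open upsets. -/
lemma isDMSet_iff {D : Set X} (hDo : IsOpen D) (hDu : IsUpperSet D) :
    IsDMSet D ↔ ∀ W : Set X, IsClopenUpset W → W ⊆ cl2 D → W ⊆ D := by
  constructor
  · rintro ⟨-, -, hDM⟩ W hW hWcl
    calc W ⊆ int1 (cl2 D) := subset_int1 hW.1.isOpen hW.2 hWcl
    _ = D := hDM
  · intro h
    refine ⟨hDo, hDu, Set.Subset.antisymm ?_ (subset_int1 hDo hDu (subset_cl2 D))⟩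
    intro x hx
    obtain ⟨W, hW, hxW, hWsub⟩ := exists_clopenUpset_mem_subset (isOpen_int1 _)
      (isUpperSet_int1 _) hx
    exact h W hW (hWsub.trans (int1_subset _)) hxW

lemma subset_cl2_iff (W D : Set X) :
    W ⊆ cl2 D ↔ ∀ Z : Set X, IsClopenUpset Z → D ⊆ Z → W ⊆ Z := by
  constructor
  · intro h Z hZ hDZ
    refine h.trans ?_
    rintro x ⟨y, hy, hyx⟩
    exact hZ.2 hyx (closure_minimal hDZ hZ.1.isClosed hy)
  · intro h x hx
    by_contra hxc
    obtain ⟨Z, hZ, hDZ, hxZ⟩ := exists_clopenUpset_superset isClosed_closure hxc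
    exact hxZ (h Z hZ (subset_closure.trans hDZ) hx)

lemma inter_subset_iff {U V W : Set X} (hW : IsUpperSet W) :
    U ∩ W ⊆ V ↔ W ⊆ (downSet (U \ V))ᶜ := by
  constructor
  · intro h w hw ⟨y, hy, hwy⟩
    exact hy.2 (h ⟨hy.1, hW hwy hw⟩)
  · rintro h u ⟨huU, huW⟩
    by_contra huV
    exact h huW ⟨u, ⟨huU, huV⟩, le_rfl⟩


/-- Point separation: around each point of a clopen set there is a basic clopen
`A \ B` with `A, B` clopen upsets, contained in the set. -/
lemma exists_diff_clopenUpsets {C : Set X} (hC : IsClopen C) {c : X} (hc : c ∈ C) :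
    ∃ A B : Set X, IsClopenUpset A ∧ IsClopenUpset B ∧ c ∈ A \ B ∧ A \ B ⊆ C := by
  have key : ∀ y : ↥(Cᶜ), ∃ p : Set X × Set X, IsClopenUpset p.1 ∧ IsClopenUpset p.2 ∧
      c ∈ p.1 ∧ c ∉ p.2 ∧ ((y : X) ∉ p.1 ∨ (y : X) ∈ p.2) := by
    rintro ⟨y, hy⟩
    have hne : c ≠ y := fun h => hy (h ▸ hc)
    by_cases hcy : c ≤ y
    · have : ¬ y ≤ c := fun h => hne (le_antisymm hcy h)
      obtain ⟨U, hUc, hUu, hyU, hcU⟩ := exists_isClopen_upper_of_not_le this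
      exact ⟨(Set.univ, U), ⟨isClopen_univ, isUpperSet_univ⟩, ⟨hUc, hUu⟩,
        Set.mem_univ c, hcU, Or.inr hyU⟩
    · obtain ⟨U, hUc, hUu, hcU, hyU⟩ := exists_isClopen_upper_of_not_le hcy
      exact ⟨(U, ∅), ⟨hUc, hUu⟩, ⟨isClopen_empty, isUpperSet_empty⟩,
        hcU, Set.notMem_empty c, Or.inl hyU⟩
  choose p hp1 hp2 hcp1 hcp2 hyp using key
  obtain ⟨t, ht⟩ := (hC.compl.isClosed).isCompact.elim_finite_subcover
    (fun y : ↥(Cᶜ) => ((p y).1)ᶜ ∪ (p y).2)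
    (fun y => ((hp1 y).1.compl.isOpen).union (hp2 y).1.isOpen)
    (fun z hz => Set.mem_iUnion.2 ⟨⟨z, hz⟩, by
      rcases hyp ⟨z, hz⟩ with h | h
      · exact Or.inl h
      · exact Or.inr h⟩)
  refine ⟨⋂ y ∈ t, (p y).1, ⋃ y ∈ t, (p y).2,
    ⟨isClopen_biInter_finset fun y _ => (hp1 y).1, isUpperSet_iInter₂ fun y _ => (hp1 y).2⟩,
    ⟨isClopen_biUnion_finset fun y _ => (hp2 y).1, isUpperSet_iUnion₂ fun y _ => (hp2 y).2⟩,
    ⟨Set.mem_iInter₂.2 fun y _ => hcp1 y, fun h => by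
      obtain ⟨y, _, hy⟩ := Set.mem_iUnion₂.1 h; exact hcp2 y hy⟩, ?_⟩
  rintro z ⟨hzA, hzB⟩
  by_contra hzC
  obtain ⟨y, hyt, hy⟩ := Set.mem_iUnion₂.1 (ht hzC)
  rcases hy with h | h
  · exact h (Set.mem_iInter₂.1 hzA y hyt)
  · exact hzB (Set.mem_iUnion₂.2 ⟨y, hyt, h⟩)

/-- The per-pair equivalence between normality of the annihilator ideal and the DM property. -/
lemma annihilator_eq_iff (U V : ClopUp X) :
    ({W : ClopUp X | U.1 ∩ W.1 ⊆ V.1} =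
        lowerBounds (upperBounds {W : ClopUp X | U.1 ∩ W.1 ⊆ V.1})) ↔
      IsDMSet ((downSet (U.1 \ V.1))ᶜ) := by
  set D : Set X := (downSet (U.1 \ V.1))ᶜ with hD
  have hDo : IsOpen D := (isClosed_downSet ((U.2.1.isClosed).sdiff V.2.1.isOpen)).isOpen_compl
  have hDu : IsUpperSet D := (isLowerSet_downSet _).compl
  have hN : {W : ClopUp X | U.1 ∩ W.1 ⊆ V.1} = {W : ClopUp X | W.1 ⊆ D} := by
    ext W; exact inter_subset_iff W.2.2
  have hub : upperBounds {W : ClopUp X | W.1 ⊆ D} = {Z : ClopUp X | D ⊆ Z.1} := by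
    ext Z
    constructor
    · intro hZ x hx
      obtain ⟨W, hW, hxW, hWD⟩ := exists_clopenUpset_mem_subset hDo hDu hx
      exact hZ (a := ⟨W, hW⟩) hWD hxW
    · intro hZ W hW
      show W.1 ⊆ Z.1
      exact hW.trans hZ
  have hlb : lowerBounds {Z : ClopUp X | D ⊆ Z.1} = {W : ClopUp X | W.1 ⊆ cl2 D} := by
    ext W
    constructor
    · intro hW
      show W.1 ⊆ cl2 D
      rw [subset_cl2_iff]
      intro Z hZ hDZ
      exact hW (a := ⟨Z, hZ⟩) hDZ
    · intro hW Z hZ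
      show W.1 ⊆ Z.1
      exact ((subset_cl2_iff W.1 D).1 hW) Z.1 Z.2 hZ
  rw [hN, hub, hlb, isDMSet_iff hDo hDu]
  constructor
  · intro h W hW hWcl
    have : (⟨W, hW⟩ : ClopUp X) ∈ {W : ClopUp X | W.1 ⊆ D} := by rw [h]; exact hWcl
    exact this
  · intro h
    ext W
    constructor
    · intro hW
      exact hW.trans (subset_cl2 D)
    · intro hW
      exact h W.1 W.2 hW

/-- (2) implies (3). -/
lemma dm_of_diff_dm
    (h2 : ∀ U V : Set X, IsClopenUpset U → IsClopenUpset V → IsDMSet ((downSet (U \ V))ᶜ))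
    {C : Set X} (hC : IsClopen C) : IsDMSet ((downSet C)ᶜ) := by
  set D : Set X := (downSet C)ᶜ with hD
  have hDo : IsOpen D := (isClosed_downSet hC.isClosed).isOpen_compl
  have hDu : IsUpperSet D := (isLowerSet_downSet _).compl
  rw [isDMSet_iff hDo hDu]
  intro W hW hWcl
  -- cover C by basic clopen sets inside C
  have key : ∀ c : C, ∃ p : Set X × Set X, IsClopenUpset p.1 ∧ IsClopenUpset p.2 ∧
      (c : X) ∈ p.1 \ p.2 ∧ p.1 \ p.2 ⊆ C := by
    rintro ⟨c, hc⟩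
    obtain ⟨A, B, hA, hB, hmem, hsub⟩ := exists_diff_clopenUpsets hC hc
    exact ⟨(A, B), hA, hB, hmem, hsub⟩
  choose p hp1 hp2 hmem hsub using key
  obtain ⟨t, ht⟩ := hC.isClosed.isCompact.elim_finite_subcover
    (fun c : C => (p c).1 \ (p c).2)
    (fun c => (hp1 c).1.isOpen.sdiff (hp2 c).1.isClosed)
    (fun c hc => Set.mem_iUnion.2 ⟨⟨c, hc⟩, hmem ⟨c, hc⟩⟩)
  intro x hxW
  rintro ⟨y, hyC, hxy⟩
  obtain ⟨c, hct, hyc⟩ := Set.mem_iUnion₂.1 (ht hyC)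
  -- D_c := (↓((p c).1 \ (p c).2))ᶜ is a DM-set and D ⊆ D_c
  have hDc := h2 (p c).1 (p c).2 (hp1 c) (hp2 c)
  set Dc : Set X := (downSet ((p c).1 \ (p c).2))ᶜ with hDcdef
  have hDsub : D ⊆ Dc := by
    apply Set.compl_subset_compl.2
    rintro z ⟨w, hw, hzw⟩
    exact ⟨w, hsub c hw, hzw⟩
  have hDco : IsOpen Dc := (isClosed_downSet ((hp1 c).1.isClosed.sdiff (hp2 c).1.isOpen)).isOpen_compl
  have hDcu : IsUpperSet Dc := (isLowerSet_downSet _).compl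
  have hWDc : W ⊆ Dc :=
    (isDMSet_iff hDco hDcu).1 hDc W hW (hWcl.trans (cl2_mono hDsub))
  exact hWDc hxW ⟨y, hyc, hxy⟩

end AuxLemmas

/-- For a Priestley space `X`, the following are equivalent:
(1) `ClopUp(X)` is proHeyting: for all clopen upsets `U, V` the relative annihilator
`{W ∈ ClopUp(X) : U ∩ W ⊆ V}` is a normal ideal of `ClopUp(X)` (a downset `N` with
`N = Nᵘˡ`); (2) for all clopen upsets `U, V`, the set `X \ ↓(U \ V)` is a DM-set;
(3) for every clopen `U`, the set `X \ ↓U` is a DM-set. -/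
theorem clopUp_proHeyting_tfae (X : Type*) [TopologicalSpace X] [PartialOrder X]
    [CompactSpace X] [PriestleySpace X] :
    ((∀ U V : ClopUp X,
        IsLowerSet {W : ClopUp X | U.1 ∩ W.1 ⊆ V.1} ∧
          {W : ClopUp X | U.1 ∩ W.1 ⊆ V.1} =
            lowerBounds (upperBounds {W : ClopUp X | U.1 ∩ W.1 ⊆ V.1})) ↔
      (∀ U V : Set X, IsClopenUpset U → IsClopenUpset V → IsDMSet ((downSet (U \ V))ᶜ))) ∧
    ((∀ U V : Set X, IsClopenUpset U → IsClopenUpset V → IsDMSet ((downSet (U \ V))ᶜ)) ↔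
      (∀ U : Set X, IsClopen U → IsDMSet ((downSet U)ᶜ))) := by
  constructor
  · constructor
    · intro h1 U V hU hV
      exact (annihilator_eq_iff ⟨U, hU⟩ ⟨V, hV⟩).1 (h1 ⟨U, hU⟩ ⟨V, hV⟩).2
    · intro h2 U V
      refine ⟨fun a b hba ha x hx => ha ⟨hx.1, hba hx.2⟩, ?_⟩
      exact (annihilator_eq_iff U V).2 (h2 U.1 V.1 U.2 V.2)
  · constructor
    · intro h2 C hC
      exact dm_of_diff_dm h2 hC
    · intro h3 U V hU hV
      exact h3 (U \ V) (hU.1.diff hV.1)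
end
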